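/- Let ρ ≥ 0. For every T > 0 there exists a constant C_T > 0 such that for all t with 0 < t ≤ T and all x, y ∈ [0,1], |H_t(x,y)| ≤ C_T · t^{−1/4}. -/
import Mathlib


open Real MeasureTheory

/-- The Green's function of `-∂_x⁴ + ρ∂_x²` on `[0,1]` with Neumann boundary conditions:
`H_t(x,y) = 1 + 2 ∑_{k=1}^∞ e^{-(k⁴π⁴ + ρk²π²)t} cos(kπx) cos(kπy)`. -/
noncomputable def Hker (ρ t x y : ℝ) : ℝ :=
  1 + 2 * ∑' k : ℕ,
      Real.exp (-(((k + 1 : ℝ) ^ 4 * π ^ 4 + ρ * (k + 1 : ℝ) ^ 2 * π ^ 2) * t)) *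
        Real.cos ((k + 1 : ℝ) * π * x) * Real.cos ((k + 1 : ℝ) * π * y)

lemma quartic_aux (u : ℝ) : u - 1 ≤ u ^ 4 := by
  nlinarith [sq_nonneg (u ^ 2 - 1), sq_nonneg (u - 1), sq_nonneg (u + 1), sq_nonneg u,
    sq_nonneg (u ^ 2 - u)]

theorem fourth_order_kernel_sup_bound (ρ : ℝ) (hρ : 0 ≤ ρ) (T : ℝ) (hT : 0 < T) :
    ∃ C : ℝ, 0 < C ∧ ∀ t x y : ℝ, 0 < t → t ≤ T →
      x ∈ Set.Icc (0 : ℝ) 1 → y ∈ Set.Icc (0 : ℝ) 1 →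
      |Hker ρ t x y| ≤ C * t ^ (-(1/4) : ℝ) := by
  refine ⟨T ^ ((1/4 : ℝ)) + 2 * Real.exp 1 / π, by positivity, ?_⟩
  intro t x y ht htT hx hy
  set s : ℝ := t ^ ((1/4 : ℝ)) with hs
  have hs0 : 0 < s := Real.rpow_pos_of_pos ht _
  have hs4 : s ^ 4 = t := by
    rw [hs, ← Real.rpow_natCast (t ^ ((1/4 : ℝ))) 4, ← Real.rpow_mul ht.le]
    norm_num
  have hps : 0 < π * s := by positivity
  set r : ℝ := Real.exp (-(π * s)) with hr
  have hr0 : 0 < r := Real.exp_pos _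
  have hr1 : r < 1 := by
    rw [hr, Real.exp_lt_one_iff]
    linarith
  set f : ℕ → ℝ := fun k =>
      Real.exp (-(((k + 1 : ℝ) ^ 4 * π ^ 4 + ρ * (k + 1 : ℝ) ^ 2 * π ^ 2) * t)) *
        Real.cos ((k + 1 : ℝ) * π * x) * Real.cos ((k + 1 : ℝ) * π * y) with hf
  have hbound : ∀ k : ℕ, |f k| ≤ Real.exp 1 * r ^ (k + 1) := by
    intro k
    have hn1 : (1 : ℝ) ≤ (k + 1 : ℝ) := by exact_mod_cast Nat.one_le_iff_ne_zero.mpr (Nat.succ_ne_zero k)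
    have habs : |f k| ≤ Real.exp (-(((k + 1 : ℝ) ^ 4 * π ^ 4 + ρ * (k + 1 : ℝ) ^ 2 * π ^ 2) * t)) := by
      rw [hf]
      simp only [abs_mul]
      calc |Real.exp _| * |Real.cos ((k + 1 : ℝ) * π * x)| * |Real.cos ((k + 1 : ℝ) * π * y)|
          ≤ |Real.exp _| * 1 * 1 := by
            gcongr <;> exact Real.abs_cos_le_one _
        _ = |Real.exp _| := by ring
        _ = Real.exp _ := abs_of_pos (Real.exp_pos _)
    have hexp : (k + 1 : ℝ) * (π * s) - 1 ≤ ((k + 1 : ℝ) ^ 4 * π ^ 4 + ρ * (k + 1 : ℝ) ^ 2 * π ^ 2) * t := by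
      have h1 : ((k + 1 : ℝ) * (π * s)) ^ 4 = (k + 1 : ℝ) ^ 4 * π ^ 4 * t := by
        rw [← hs4]; ring
      have h2 : (k + 1 : ℝ) * (π * s) - 1 ≤ ((k + 1 : ℝ) * (π * s)) ^ 4 := quartic_aux _
      have h3 : 0 ≤ ρ * (k + 1 : ℝ) ^ 2 * π ^ 2 * t := by positivity
      nlinarith
    have : Real.exp (-(((k + 1 : ℝ) ^ 4 * π ^ 4 + ρ * (k + 1 : ℝ) ^ 2 * π ^ 2) * t))
        ≤ Real.exp (1 - (k + 1 : ℝ) * (π * s)) := by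
      apply Real.exp_le_exp.mpr; linarith
    refine habs.trans (this.trans ?_)
    have : Real.exp (1 - (k + 1 : ℝ) * (π * s)) = Real.exp 1 * r ^ (k + 1) := by
      rw [hr, ← Real.exp_nat_mul, ← Real.exp_add]
      congr 1
      push_cast
      ring
    rw [this]
  have hg : Summable (fun k : ℕ => Real.exp 1 * r ^ (k + 1)) := by
    have : Summable (fun k : ℕ => r ^ k) := summable_geometric_of_lt_one hr0.le hr1
    simpa [pow_succ, mul_comm, mul_assoc, mul_left_comm] using (this.mul_left (Real.exp 1 * r))
  have hfs : Summable fun k => |f k| :=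
    Summable.of_nonneg_of_le (fun k => abs_nonneg _) hbound hg
  have htsum : |∑' k, f k| ≤ Real.exp 1 * (r * (1 - r)⁻¹) := by
    calc |∑' k, f k| ≤ ∑' k, |f k| := by
          simpa using norm_tsum_le_tsum_norm (by simpa using hfs : Summable fun k => ‖f k‖)
      _ ≤ ∑' k : ℕ, Real.exp 1 * r ^ (k + 1) := Summable.tsum_le_tsum hbound hfs hg
      _ = Real.exp 1 * (r * (1 - r)⁻¹) := by
          rw [tsum_mul_left]
          congr 1
          have : ∀ k : ℕ, r ^ (k + 1) = r * r ^ k := fun k => by rw [pow_succ]; ring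
          rw [tsum_congr this, tsum_mul_left, tsum_geometric_of_lt_one hr0.le hr1]
  have h1r : 0 < 1 - r := by linarith
  have key : r * (1 + π * s) ≤ 1 := by
    have h := Real.add_one_le_exp (π * s)
    have : r * (1 + π * s) ≤ r * Real.exp (π * s) := by nlinarith
    refine this.trans_eq ?_
    rw [hr, ← Real.exp_add]
    simp
  have hgeo : r * (1 - r)⁻¹ ≤ (π * s)⁻¹ := by
    rw [← div_eq_mul_inv, div_le_iff₀ h1r]
    have hinv : (π * s) * (π * s)⁻¹ = 1 := mul_inv_cancel₀ hps.ne'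
    nlinarith [inv_nonneg.mpr hps.le]
  have hHs : |Hker ρ t x y| ≤ 1 + 2 * (Real.exp 1 * (π * s)⁻¹) := by
    rw [Hker]
    calc |1 + 2 * ∑' k, f k| ≤ 1 + 2 * |∑' k, f k| := by
          refine (abs_add_le _ _).trans ?_
          simp [abs_mul]
      _ ≤ 1 + 2 * (Real.exp 1 * (r * (1 - r)⁻¹)) := by linarith
      _ ≤ 1 + 2 * (Real.exp 1 * (π * s)⁻¹) := by
          have := Real.exp_pos 1
          nlinarith [hgeo]
  have hts : t ^ (-(1/4) : ℝ) = s⁻¹ := by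
    rw [hs, ← Real.rpow_neg_one (t ^ ((1/4 : ℝ))), ← Real.rpow_mul ht.le]
    norm_num
  rw [hts]
  have hsT : s ≤ T ^ ((1/4 : ℝ)) := Real.rpow_le_rpow ht.le htT (by norm_num)
  have h1s : 1 ≤ T ^ ((1/4 : ℝ)) * s⁻¹ := by
    rw [← div_eq_mul_inv, le_div_iff₀ hs0]
    simpa using hsT
  have hexp1 : Real.exp 1 * (π * s)⁻¹ = (Real.exp 1 / π) * s⁻¹ := by
    field_simp
  refine hHs.trans ?_
  rw [hexp1]
  have expand : (T ^ ((1/4 : ℝ)) + 2 * Real.exp 1 / π) * s⁻¹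
      = T ^ ((1/4 : ℝ)) * s⁻¹ + 2 * (Real.exp 1 / π * s⁻¹) := by ring
  rw [expand]
  linarith
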